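/- Let q_0 = 2^d and s a positive integer, H an s × s matrix over F_{q_0}, F(X) = X H X^T, and r = rank(H + H^T). As A ranges over F_{q_0}^s, the sum T(A) = Σ_{X ∈ F_{q_0}^s} (-1)^{Tr_{F_{q_0}/F_2}(F(X) + A X^T)} takes the value 0 for exactly q_0^s − q_0^r vectors A, the value q_0^{s − r/2} for exactly (q_0^r + q_0^{r/2})/2 vectors A, and the value −q_0^{s − r/2} for exactly (q_0^r − q_0^{r/2})/2 vectors A. -/

import Mathlib

/-!
Squaring `T(A)` and substituting `Y = X + Z`, the cross terms of `F` collapse in characteristic 2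
to the polar form `B = H + Hᵀ`, and summing over `X` leaves
`T(A)² = q₀ˢ · ∑_{z ∈ ker B} (-1)^Tr(F(z) + A zᵀ)`. On `ker B` the form `F` is additive, so this
is a sum of a character over a group of order `q₀^(s - r)`: `T(A)² ∈ {0, q₀^(2s - r)}`.
Since `B` is alternating, `r` is even and `T(A) ∈ {0, ±q₀^(s - r/2)}`. The three multiplicities
are then forced by `∑_A T(A) = q₀ˢ` and the Parseval identity `∑_A T(A)² = q₀^(2s)`.
-/

open Matrix Module

namespace LinearMap.BilinForm.IsAlt

variable {K V : Type*} [Field K] [AddCommGroup V] [Module K V] {β : LinearMap.BilinForm K V}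

lemma apply_swap_eq_neg_one (hβ : β.IsAlt) {e f : V} (hef : β e f = 1) : β f e = -1 := by
  rw [← hβ.neg_eq, hef]

lemma surjective_prod_of_apply_eq_one (hβ : β.IsAlt) {e f : V} (hef : β e f = 1) :
    Function.Surjective ((β e).prod (β f)) := by
  rintro ⟨a, b⟩
  refine ⟨a • f - b • e, ?_⟩
  simp [hef, hβ.apply_swap_eq_neg_one hef, hβ.self_eq_zero]

lemma map_subtype_ker_restrict_ker_prod (hβ : β.IsAlt) {e f : V} (hef : β e f = 1) :
    (ker (β.restrict (ker ((β e).prod (β f))))).map (Submodule.subtype _) = ker β := by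
  set W := ker ((β e).prod (β f))
  have mem_W : ∀ v, v ∈ W ↔ β e v = 0 ∧ β f v = 0 := by simp [W]
  have apply_mem_W : ∀ w ∈ W, β w e = 0 ∧ β w f = 0 := fun w hw ↦ by
    simp [← hβ.neg_eq _ w, (mem_W w).1 hw]
  ext x
  simp only [Submodule.mem_map, mem_ker, Submodule.coe_subtype]
  constructor
  · rintro ⟨w, hw, rfl⟩
    ext v
    -- `v` differs from an element of `W` by a combination of `e` and `f`
    have hv : v + β f v • e - β e v • f ∈ W := by
      simp [mem_W, hef, hβ.apply_swap_eq_neg_one hef, hβ.self_eq_zero, mul_comm]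
    simpa [apply_mem_W w w.2] using LinearMap.congr_fun hw ⟨_, hv⟩
  · intro hx
    have hxW : x ∈ W := by simp [mem_W, ← hβ.neg_eq x, hx]
    exact ⟨⟨x, hxW⟩, by ext; simp [hx], rfl⟩

theorem even_finrank_sub_finrank_ker [FiniteDimensional K V] (hβ : β.IsAlt) :
    Even (finrank K V - finrank K (ker β)) := by
  induction h : finrank K V using Nat.strong_induction_on generalizing V with
  | _ n ih =>
  subst h
  by_cases hβ0 : β = 0
  · subst hβ0
    rw [LinearMap.ker_zero, finrank_top, Nat.sub_self]
    exact Even.zero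
  obtain ⟨e, f, hef⟩ : ∃ e f, β e f = 1 := by
    obtain ⟨e, y, hey⟩ : ∃ e y, β e y ≠ 0 := by
      by_contra! h
      exact hβ0 (LinearMap.ext₂ h)
    exact ⟨e, (β e y)⁻¹ • y, by simp [hey]⟩
  have hW : finrank K (ker ((β e).prod (β f))) + 2 = finrank K V := by
    have := finrank_range_add_finrank_ker ((β e).prod (β f))
    rw [range_eq_top.2 (hβ.surjective_prod_of_apply_eq_one hef), finrank_top,
      finrank_prod, finrank_self] at this
    omega
  set W := ker ((β e).prod (β f))
  have hker : finrank K (ker (β.restrict W)) = finrank K (ker β) := by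
    rw [← hβ.map_subtype_ker_restrict_ker_prod hef]
    exact (Submodule.equivMapOfInjective _ W.injective_subtype _).finrank_eq
  obtain ⟨k, hk⟩ := ih _ (by omega) (β := β.restrict W) (fun w ↦ hβ w) rfl
  have := Submodule.finrank_le (ker (β.restrict W))
  exact ⟨k + 1, by omega⟩

end LinearMap.BilinForm.IsAlt

namespace Matrix

variable {K ι : Type*} [Field K] [Fintype ι]

lemma rank_add_finrank_ker_mulVecLin {m : Type*} [Fintype m] (B : Matrix m ι K) :
    B.rank + finrank K (LinearMap.ker B.mulVecLin) = Fintype.card ι := by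
  rw [rank, LinearMap.finrank_range_add_finrank_ker, finrank_fintype_fun_eq_card]

lemma nat_card_ker_mulVecLin [Fintype K] {m : Type*} [Fintype m] (B : Matrix m ι K) :
    Nat.card (LinearMap.ker B.mulVecLin) = Fintype.card K ^ (Fintype.card ι - B.rank) := by
  classical
  rw [Nat.card_eq_fintype_card, card_eq_pow_finrank (K := K),
    ← rank_add_finrank_ker_mulVecLin B, Nat.add_sub_cancel_left]

lemma ker_toBilin'_transpose [DecidableEq ι] (B : Matrix ι ι K) :
    LinearMap.ker (toBilin' Bᵀ) = LinearMap.ker B.mulVecLin := by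
  ext x
  simp [LinearMap.ext_iff, toBilin'_apply', dotProduct_mulVec, vecMul_transpose,
    dotProduct_eq_zero_iff]

theorem even_rank_of_dotProduct_mulVec_self_eq_zero {B : Matrix ι ι K}
    (hB : ∀ x, x ⬝ᵥ B *ᵥ x = 0) : Even B.rank := by
  classical
  have hβ : (toBilin' Bᵀ).IsAlt := fun x ↦ by
    rw [toBilin'_apply', dotProduct_mulVec, vecMul_transpose, dotProduct_comm, hB]
  have := hβ.even_finrank_sub_finrank_ker
  rwa [ker_toBilin'_transpose, finrank_fintype_fun_eq_card,
    ← rank_add_finrank_ker_mulVecLin B, Nat.add_sub_cancel] at this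

lemma add_dotProduct_mulVec_add {R : Type*} [CommRing R] (H : Matrix ι ι R) (X Z : ι → R) :
    (X + Z) ⬝ᵥ H *ᵥ (X + Z) = X ⬝ᵥ H *ᵥ X + Z ⬝ᵥ H *ᵥ Z + X ⬝ᵥ (H + Hᵀ) *ᵥ Z := by
  have : Z ⬝ᵥ H *ᵥ X = X ⬝ᵥ Hᵀ *ᵥ Z := by
    rw [dotProduct_mulVec, ← mulVec_transpose, dotProduct_comm]
  simp only [mulVec_add, add_mulVec, dotProduct_add, add_dotProduct, this]
  ring

lemma dotProduct_add_transpose_mulVec_self {R : Type*} [CommRing R] [CharP R 2]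
    (H : Matrix ι ι R) (x : ι → R) : x ⬝ᵥ (H + Hᵀ) *ᵥ x = 0 := by
  rw [add_mulVec, dotProduct_add, mulVec_transpose, dotProduct_comm x (x ᵥ* H),
    ← dotProduct_mulVec, CharTwo.add_self_eq_zero]

lemma even_rank_add_transpose [CharP K 2] (H : Matrix ι ι K) : Even (H + Hᵀ).rank :=
  even_rank_of_dotProduct_mulVec_self_eq_zero (dotProduct_add_transpose_mulVec_self H)

end Matrix

section Trichotomy

open Finset

variable {α : Type*} [Fintype α] {f : α → ℤ} {t : ℤ}

lemma sum_comp_eq_of_trichotomy (ht : t ≠ 0) (hf : ∀ a, f a = 0 ∨ f a = t ∨ f a = -t)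
    (g : ℤ → ℤ) :
    ∑ a, g (f a) = #{a | f a = 0} * g 0 + #{a | f a = t} * g t + #{a | f a = -t} * g (-t) := by
  have hmaps : ∀ a ∈ univ, f a ∈ ({0, t, -t} : Finset ℤ) := by simpa using hf
  rw [← sum_fiberwise_of_maps_to' hmaps, sum_insert (by simp [ht, eq_comm (a := (0 : ℤ))]),
    sum_insert (by simp [(neg_ne_self.2 ht).symm]), sum_singleton]
  simp only [sum_const, nsmul_eq_mul, add_assoc]

lemma card_filter_eq_of_trichotomy (ht : t ≠ 0) (hf : ∀ a, f a = 0 ∨ f a = t ∨ f a = -t)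
    {a b : ℤ} (h₁ : ∑ x, f x = a * t) (h₂ : ∑ x, f x ^ 2 = b * t ^ 2) :
    #{x | f x = 0} + b = Fintype.card α ∧ #{x | f x = t} + #{x | f x = -t} = b ∧
      #{x | f x = t} - #{x | f x = -t} = a := by
  have hsum := sum_comp_eq_of_trichotomy ht hf
  have hcard := hsum fun _ ↦ 1
  have hlin := hsum id
  have hsq := hsum (· ^ 2)
  simp only [sum_const, card_univ, nsmul_eq_mul, mul_one, id] at hcard hlin hsq
  have hadd : (#{x | f x = t} + #{x | f x = -t} : ℤ) = b :=
    mul_right_cancel₀ (pow_ne_zero 2 ht) (by linear_combination hsq.symm.trans h₂)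
  refine ⟨?_, hadd, mul_right_cancel₀ ht (by linear_combination hlin.symm.trans h₁)⟩
  linear_combination hcard.symm - hadd

end Trichotomy

section Walsh

variable {K ι R : Type*} [Field K] [Fintype K] [Fintype ι] [DecidableEq ι] [CommRing R]
  {ψ : AddChar K R}

/-- For `ψ = (-1)^Tr` and `f = F` this is the sum `T(A)`. -/
def walsh (ψ : AddChar K R) (f : (ι → K) → K) (A : ι → K) : R :=
  ∑ X, ψ (f X + A ⬝ᵥ X)

lemma walsh_eq_sum_mul (ψ : AddChar K R) (f : (ι → K) → K) (A : ι → K) :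
    walsh ψ f A = ∑ X, ψ (f X) * ψ (X ⬝ᵥ A) := by
  simp only [walsh, AddChar.map_add_eq_mul, dotProduct_comm A]

variable [IsDomain R]

open Classical in
lemma AddChar.sum_dotProduct (hψ : ψ ≠ 1) (v : ι → K) :
    ∑ X, ψ (v ⬝ᵥ X) = if v = 0 then (Fintype.card K : R) ^ Fintype.card ι else 0 := by
  split_ifs with hv
  · simp [hv]
  obtain ⟨i, hi⟩ := Function.ne_iff.1 hv
  obtain ⟨b, hb⟩ := AddChar.ne_one_iff.1 (AddChar.IsPrimitive.of_ne_one hψ hi)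
  let χ : AddChar (ι → K) R :=
    { toFun X := ψ (v ⬝ᵥ X)
      map_zero_eq_one' := by simp
      map_add_eq_mul' X Y := by simp [dotProduct_add, AddChar.map_add_eq_mul] }
  refine AddChar.sum_eq_zero_of_ne_one (ψ := χ) (AddChar.ne_one_iff.2 ⟨Pi.single i b, ?_⟩)
  simpa [χ] using hb

lemma sum_walsh (hψ : ψ ≠ 1) (f : (ι → K) → K) :
    ∑ A, walsh ψ f A = (Fintype.card K : R) ^ Fintype.card ι * ψ (f 0) := by
  classical
  calc ∑ A, walsh ψ f A = ∑ X, ψ (f X) * ∑ A, ψ (X ⬝ᵥ A) := by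
        simp only [walsh_eq_sum_mul, Finset.mul_sum]
        exact Finset.sum_comm
    _ = _ := by simp [AddChar.sum_dotProduct hψ, mul_comm]

lemma sum_walsh_sq (hψ : ψ ≠ 1) (f : (ι → K) → K) :
    ∑ A, walsh ψ f A ^ 2 =
      (Fintype.card K : R) ^ Fintype.card ι * ∑ X, ψ (f X) * ψ (f (-X)) := by
  classical
  have walsh_sq (A : ι → K) :
      walsh ψ f A ^ 2 = ∑ X, ∑ Y, ψ (f X) * ψ (f Y) * ψ ((X + Y) ⬝ᵥ A) := by
    simp only [walsh_eq_sum_mul, sq, Finset.sum_mul_sum, add_dotProduct,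
      AddChar.map_add_eq_mul]
    exact Finset.sum_congr rfl fun X _ ↦ Finset.sum_congr rfl fun Y _ ↦ by ring
  calc ∑ A, walsh ψ f A ^ 2
      = ∑ X, ∑ Y, ψ (f X) * ψ (f Y) * ∑ A, ψ ((X + Y) ⬝ᵥ A) := by
        simp only [walsh_sq, Finset.mul_sum]
        rw [Finset.sum_comm]
        exact Finset.sum_congr rfl fun X _ ↦ Finset.sum_comm
    _ = ∑ X, ψ (f X) * ψ (f (-X)) * (Fintype.card K : R) ^ Fintype.card ι := by
        refine Finset.sum_congr rfl fun X _ ↦ ?_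
        simp only [AddChar.sum_dotProduct hψ, mul_ite, mul_zero, add_eq_zero_iff_eq_neg',
          Finset.sum_ite_eq', Finset.mem_univ, if_true]
    _ = _ := by rw [Finset.mul_sum]; simp only [mul_comm]

variable [CharP K 2]

lemma sum_walsh_quadratic_sq (hψ : ψ ≠ 1) (H : Matrix ι ι K) :
    ∑ A, walsh ψ (fun X ↦ X ⬝ᵥ H *ᵥ X) A ^ 2 =
      ((Fintype.card K : R) ^ Fintype.card ι) ^ 2 := by
  rw [sum_walsh_sq hψ]
  simp [mulVec_neg, ← AddChar.map_add_eq_mul, CharTwo.add_self_eq_zero, sq]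

open Classical in
lemma walsh_quadratic_sq (hψ : ψ ≠ 1) (H : Matrix ι ι K) (A : ι → K) :
    walsh ψ (fun X ↦ X ⬝ᵥ H *ᵥ X) A ^ 2 = (Fintype.card K : R) ^ Fintype.card ι *
      ∑ z : LinearMap.ker (H + Hᵀ).mulVecLin, ψ (z ⬝ᵥ H *ᵥ z + A ⬝ᵥ z) := by
  set g := fun Z ↦ ψ (Z ⬝ᵥ H *ᵥ Z + A ⬝ᵥ Z)
  calc walsh ψ (fun X ↦ X ⬝ᵥ H *ᵥ X) A ^ 2 = ∑ X, ∑ Z, g X * g (X + Z) := by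
        rw [sq, walsh, Finset.sum_mul_sum]
        exact Finset.sum_congr rfl fun X _ ↦
          (Fintype.sum_equiv (Equiv.addLeft X) _ _ fun _ ↦ rfl).symm
    _ = ∑ X, ∑ Z, g Z * ψ (((H + Hᵀ) *ᵥ Z) ⬝ᵥ X) := by
        refine Finset.sum_congr rfl fun X _ ↦ Finset.sum_congr rfl fun Z _ ↦ ?_
        -- in characteristic 2 the terms of `g X` cancel against those of `g (X + Z)`
        simp only [g, ← AddChar.map_add_eq_mul, add_dotProduct_mulVec_add, dotProduct_add]
        congr 1
        linear_combination CharTwo.add_self_eq_zero (X ⬝ᵥ H *ᵥ X) +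
          CharTwo.add_self_eq_zero (A ⬝ᵥ X) + dotProduct_comm X ((H + Hᵀ) *ᵥ Z)
    _ = ∑ Z, if (H + Hᵀ) *ᵥ Z = 0 then (Fintype.card K : R) ^ Fintype.card ι * g Z else 0 := by
        rw [Finset.sum_comm]
        simp only [← Finset.mul_sum, AddChar.sum_dotProduct hψ, mul_ite, zero_mul, mul_comm]
    _ = _ := by
        rw [← Finset.sum_filter, ← Finset.mul_sum]
        congr 1
        exact Finset.sum_subtype _ (fun _ ↦ by
          simp only [Finset.mem_filter, Finset.mem_univ, true_and, LinearMap.mem_ker,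
            mulVecLin_apply]) g

open Classical in
lemma walsh_quadratic_sq_eq_zero_or (hψ : ψ ≠ 1) (H : Matrix ι ι K) (A : ι → K) :
    walsh ψ (fun X ↦ X ⬝ᵥ H *ᵥ X) A ^ 2 = 0 ∨ walsh ψ (fun X ↦ X ⬝ᵥ H *ᵥ X) A ^ 2 =
      (Fintype.card K : R) ^ Fintype.card ι *
        (Fintype.card K : R) ^ (Fintype.card ι - (H + Hᵀ).rank) := by
  -- the quadratic form is additive on the radical of its polar form
  let χ : AddChar (LinearMap.ker (H + Hᵀ).mulVecLin) R :=
    { toFun z := ψ (z ⬝ᵥ H *ᵥ z + A ⬝ᵥ z)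
      map_zero_eq_one' := by simp
      map_add_eq_mul' z w := by
        have hw : (H + Hᵀ) *ᵥ (w : ι → K) = 0 := w.2
        simp only [Submodule.coe_add, add_dotProduct_mulVec_add, hw, dotProduct_zero,
          add_zero, dotProduct_add, ← AddChar.map_add_eq_mul]
        ring_nf }
  rw [walsh_quadratic_sq hψ]
  change _ * ∑ z, χ z = 0 ∨ _ * ∑ z, χ z = _
  rw [AddChar.sum_eq_ite]
  split_ifs
  · right
    rw [← Nat.card_eq_fintype_card (α := LinearMap.ker (H + Hᵀ).mulVecLin),
      nat_card_ker_mulVecLin]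
    push_cast
    rfl
  · exact .inl (mul_zero _)

lemma walsh_quadratic_trichotomy (hψ : ψ ≠ 1) (H : Matrix ι ι K) (A : ι → K) :
    walsh ψ (fun X ↦ X ⬝ᵥ H *ᵥ X) A = 0 ∨
      walsh ψ (fun X ↦ X ⬝ᵥ H *ᵥ X) A =
        (Fintype.card K : R) ^ (Fintype.card ι - (H + Hᵀ).rank / 2) ∨
      walsh ψ (fun X ↦ X ⬝ᵥ H *ᵥ X) A =
        -(Fintype.card K : R) ^ (Fintype.card ι - (H + Hᵀ).rank / 2) := by
  obtain ⟨k, hk⟩ := even_rank_add_transpose H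
  have hr := rank_le_card_width (H + Hᵀ)
  rcases walsh_quadratic_sq_eq_zero_or hψ H A with h | h
  · exact .inl (pow_eq_zero_iff two_ne_zero |>.1 h)
  · refine .inr (sq_eq_sq_iff_eq_or_eq_neg.1 (h.trans ?_))
    rw [← pow_add, ← pow_mul]
    congr 1
    omega

theorem ncard_walsh_quadratic {K ι : Type*} [Field K] [Fintype K] [CharP K 2] [Fintype ι]
    [DecidableEq ι] {ψ : AddChar K ℤ} (hψ : ψ ≠ 1) (H : Matrix ι ι K) :
    {A | walsh ψ (fun X ↦ X ⬝ᵥ H *ᵥ X) A = 0}.ncard =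
        Fintype.card K ^ Fintype.card ι - Fintype.card K ^ (H + Hᵀ).rank ∧
    {A | walsh ψ (fun X ↦ X ⬝ᵥ H *ᵥ X) A =
        (Fintype.card K : ℤ) ^ (Fintype.card ι - (H + Hᵀ).rank / 2)}.ncard =
        (Fintype.card K ^ (H + Hᵀ).rank + Fintype.card K ^ ((H + Hᵀ).rank / 2)) / 2 ∧
    {A | walsh ψ (fun X ↦ X ⬝ᵥ H *ᵥ X) A =
        -(Fintype.card K : ℤ) ^ (Fintype.card ι - (H + Hᵀ).rank / 2)}.ncard =
        (Fintype.card K ^ (H + Hᵀ).rank - Fintype.card K ^ ((H + Hᵀ).rank / 2)) / 2 := by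
  classical
  obtain ⟨k, hk⟩ := even_rank_add_transpose H
  have hr := rank_le_card_width (H + Hᵀ)
  obtain ⟨hzero, hadd, hdiff⟩ := card_filter_eq_of_trichotomy
    (pow_ne_zero _ (Nat.cast_ne_zero.2 Fintype.card_ne_zero)) (walsh_quadratic_trichotomy hψ H)
    (a := ((Fintype.card K ^ ((H + Hᵀ).rank / 2) : ℕ) : ℤ))
    (b := ((Fintype.card K ^ (H + Hᵀ).rank : ℕ) : ℤ))
    (by
      rw [sum_walsh hψ, zero_dotProduct, AddChar.map_zero_eq_one, mul_one]
      push_cast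
      rw [← pow_add]
      congr 1
      omega)
    (by
      rw [sum_walsh_quadratic_sq hψ]
      push_cast
      rw [← pow_mul, ← pow_mul, ← pow_add]
      congr 1
      omega)
  simp only [Set.ncard_eq_toFinset_card', Set.toFinset_ofPred, Fintype.card_pi,
    Finset.prod_const, Finset.card_univ] at hzero ⊢
  generalize Fintype.card K ^ Fintype.card ι = N at *
  generalize Fintype.card K ^ (H + Hᵀ).rank = P at *
  generalize Fintype.card K ^ ((H + Hᵀ).rank / 2) = Q at *
  omega

noncomputable def traceChar (K : Type*) [Field K] [Algebra (ZMod 2) K] : AddChar K ℤ :=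
  (AddChar.zmodChar 2 (by norm_num : (-1 : ℤ) ^ 2 = 1)).compAddMonoidHom
    (Algebra.trace (ZMod 2) K).toAddMonoidHom

lemma traceChar_ne_one (K : Type*) [Field K] [Finite K] [Algebra (ZMod 2) K] :
    traceChar K ≠ 1 := by
  obtain ⟨a, ha⟩ := Algebra.trace_surjective (ZMod 2) K 1
  refine AddChar.ne_one_iff.2 ⟨a, ?_⟩
  simp [traceChar, AddChar.zmodChar_apply, ha, ZMod.val_one]

theorem stmt_10_general (d s : ℕ) (hd : 0 < d) [Fintype (GaloisField 2 d)]
    (H : Matrix (Fin s) (Fin s) (GaloisField 2 d)) (r : ℕ)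
    (hr : r = (H + H.transpose).rank)
    (T : (Fin s → GaloisField 2 d) → ℤ)
    (hT : ∀ A, T A = ∑ X : Fin s → GaloisField 2 d,
        (-1 : ℤ) ^ (Algebra.trace (ZMod 2) (GaloisField 2 d)
          (X ⬝ᵥ H.mulVec X + A ⬝ᵥ X)).val) :
    {A : Fin s → GaloisField 2 d | T A = 0}.ncard = (2 ^ d) ^ s - (2 ^ d) ^ r ∧
    {A : Fin s → GaloisField 2 d | T A = ((2 : ℤ) ^ d) ^ (s - r / 2)}.ncard
      = ((2 ^ d) ^ r + (2 ^ d) ^ (r / 2)) / 2 ∧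
    {A : Fin s → GaloisField 2 d | T A = -((2 : ℤ) ^ d) ^ (s - r / 2)}.ncard
      = ((2 ^ d) ^ r - (2 ^ d) ^ (r / 2)) / 2 := by
  have hcard : Fintype.card (GaloisField 2 d) = 2 ^ d := by
    rw [← Nat.card_eq_fintype_card, GaloisField.card 2 d hd.ne']
  have hTW : T = walsh (traceChar (GaloisField 2 d)) (fun X ↦ X ⬝ᵥ H *ᵥ X) := funext hT
  have := ncard_walsh_quadratic (traceChar_ne_one (GaloisField 2 d)) H
  rw [hcard, Fintype.card_fin, ← hr, ← hTW] at this
  exact_mod_cast this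

/-- value distribution of T(A) = ∑_X (-1)^{Tr(F(X) + A Xᵀ)} as A ranges
over F_{q₀}^s, where F(X) = X H Xᵀ and r = rank(H + Hᵀ): the value 0 occurs q₀^s - q₀^r
times, q₀^{s-r/2} occurs (q₀^r + q₀^{r/2})/2 times, and -q₀^{s-r/2} occurs
(q₀^r - q₀^{r/2})/2 times. -/
theorem stmt_10 (d s : ℕ) (hd : 0 < d) (hs : 0 < s) [Fintype (GaloisField 2 d)]
    (H : Matrix (Fin s) (Fin s) (GaloisField 2 d)) (r : ℕ)
    (hr : r = (H + H.transpose).rank)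
    (T : (Fin s → GaloisField 2 d) → ℤ)
    (hT : ∀ A, T A = ∑ X : Fin s → GaloisField 2 d,
        (-1 : ℤ) ^ (Algebra.trace (ZMod 2) (GaloisField 2 d)
          (X ⬝ᵥ H.mulVec X + A ⬝ᵥ X)).val) :
    {A : Fin s → GaloisField 2 d | T A = 0}.ncard = (2 ^ d) ^ s - (2 ^ d) ^ r ∧
    {A : Fin s → GaloisField 2 d | T A = ((2 : ℤ) ^ d) ^ (s - r / 2)}.ncard
      = ((2 ^ d) ^ r + (2 ^ d) ^ (r / 2)) / 2 ∧
    {A : Fin s → GaloisField 2 d | T A = -((2 : ℤ) ^ d) ^ (s - r / 2)}.ncard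
      = ((2 ^ d) ^ r - (2 ^ d) ^ (r / 2)) / 2 :=
  stmt_10_general d s hd H r hr T hT
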